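/- arXiv:1004.4416 — 3 statements merged into one kernel-verified Lean document; each statement's English description precedes it below -/
import Mathlib

section
/- Under hypothesis (H), the random walk is transient: for all x, y ∈ S the series G(x,y) = ∑_{n=0}^∞ p_n(x,y) converges (is finite). -/
open scoped Classical

noncomputable section

/-! In a tree every vertex `x ≠ y` has exactly one neighbour closer to `y`, and the walk steps
there with probability at most `a = 1/2 - η < 1/2`. Hence `f(x) = L ^ d(x, y)` with `L < 1` is a
Lyapunov function, `P f ≤ θ f` with `θ = a / L + (1 - a) L`, and `θ < 1` as soon as
`a / (1 - a) < L < 1`. Iterating gives `p_n(x, y) ≤ θ ^ n f(x)`, a geometric bound. -/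

/-- The `n`-step transition probabilities of the nearest-neighbour walk with
one-step transition probabilities `p`. -/
def pn {S : Type*} (p : S → S → ℝ) : ℕ → S → S → ℝ
  | 0, x, y => if x = y then 1 else 0
  | n + 1, x, y => ∑' z, p x z * pn p n z y

namespace SimpleGraph

variable {V : Type*} {G : SimpleGraph V}

lemma IsAcyclic.eq_of_adj_of_dist_add_one_eq (hG : G.IsAcyclic) {u v v' w : V}
    (h : G.Adj u v) (h' : G.Adj u v') (hd : G.dist v w + 1 = G.dist u w)
    (hd' : G.dist v' w + 1 = G.dist u w) : v = v' := by
  have hreach : G.Reachable u w := Reachable.of_dist_ne_zero (by omega)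
  obtain ⟨q, -, hq⟩ := (h.symm.reachable.trans hreach).exists_path_of_dist
  obtain ⟨q', -, hq'⟩ := (h'.symm.reachable.trans hreach).exists_path_of_dist
  have hpath : (Walk.cons h q).IsPath :=
    Walk.isPath_of_length_eq_dist _ (by rw [Walk.length_cons, hq, hd])
  have hpath' : (Walk.cons h' q').IsPath :=
    Walk.isPath_of_length_eq_dist _ (by rw [Walk.length_cons, hq', hd'])
  have heq : Walk.cons h q = Walk.cons h' q' :=
    congrArg Subtype.val ((hG.subsingleton_path u w).elim ⟨_, hpath⟩ ⟨_, hpath'⟩)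
  simpa [Walk.snd_cons] using congrArg Walk.snd heq

lemma IsTree.exists_adj_dist_add_one_eq (hG : G.IsTree) {w y : V} (hwy : w ≠ y) :
    ∃ c, G.Adj w c ∧ G.dist c y + 1 = G.dist w y ∧
      ∀ z, G.Adj w z → z ≠ c → G.dist z y = G.dist w y + 1 := by
  obtain ⟨q, -, hq⟩ := hG.connected.exists_path_of_dist w y
  cases q with
  | nil => exact absurd rfl hwy
  | @cons _ c _ hc q =>
    have hcloser : G.dist c y + 1 = G.dist w y := by
      have hle := dist_le q
      have htri := hG.connected.dist_triangle (u := w) (v := c) (w := y)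
      rw [dist_eq_one_iff_adj.mpr hc] at htri
      rw [Walk.length_cons] at hq
      omega
    refine ⟨c, hc, hcloser, fun z hz hzc => ?_⟩
    rw [dist_comm (u := z), dist_comm (u := w)]
    rcases hG.dist_eq_dist_add_one_of_adj y hz with h | h
    · rw [dist_comm (u := y) (v := w), dist_comm (u := y) (v := z)] at h
      exact absurd (hG.isAcyclic.eq_of_adj_of_dist_add_one_eq hz hc h.symm hcloser) hzc
    · exact h

end SimpleGraph

section Kernel

variable {S : Type*} {p : S → S → ℝ}

lemma pn_nonneg (hp : ∀ x y, 0 ≤ p x y) (n : ℕ) (x y : S) : 0 ≤ pn p n x y := by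
  induction n generalizing x with
  | zero => unfold pn; split_ifs <;> norm_num
  | succ n ih => exact tsum_nonneg fun z => mul_nonneg (hp x z) (ih z)

variable (G : SimpleGraph S) [∀ x : S, Fintype (G.neighborSet x)]

lemma pn_succ_eq_sum (hp_zero : ∀ x y, ¬ G.Adj x y → p x y = 0) (n : ℕ) (x y : S) :
    pn p (n + 1) x y = ∑ z ∈ G.neighborFinset x, p x z * pn p n z y :=
  tsum_eq_sum fun z hz => by
    rw [hp_zero x z (by simpa using hz), zero_mul]

lemma pn_le_pow_mul_of_drift (hp : ∀ x y, 0 ≤ p x y)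
    (hp_zero : ∀ x y, ¬ G.Adj x y → p x y = 0) {f : S → ℝ} {θ : ℝ} {y : S}
    (hf : ∀ x, 0 ≤ f x) (hfy : 1 ≤ f y) (hθ : 0 ≤ θ)
    (hdrift : ∀ x, ∑ z ∈ G.neighborFinset x, p x z * f z ≤ θ * f x) (n : ℕ) (x : S) :
    pn p n x y ≤ θ ^ n * f x := by
  induction n generalizing x with
  | zero =>
    unfold pn
    split_ifs with hxy
    · simpa [hxy] using hfy
    · simpa using hf x
  | succ n ih =>
    calc pn p (n + 1) x y
        = ∑ z ∈ G.neighborFinset x, p x z * pn p n z y := pn_succ_eq_sum G hp_zero n x y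
      _ ≤ ∑ z ∈ G.neighborFinset x, p x z * (θ ^ n * f z) :=
          Finset.sum_le_sum fun z _ => mul_le_mul_of_nonneg_left (ih z) (hp x z)
      _ = θ ^ n * ∑ z ∈ G.neighborFinset x, p x z * f z := by
          rw [Finset.mul_sum]; exact Finset.sum_congr rfl fun z _ => by ring
      _ ≤ θ ^ n * (θ * f x) := mul_le_mul_of_nonneg_left (hdrift x) (pow_nonneg hθ n)
      _ = θ ^ (n + 1) * f x := by ring

lemma summable_pn_of_drift (hp : ∀ x y, 0 ≤ p x y)
    (hp_zero : ∀ x y, ¬ G.Adj x y → p x y = 0) {f : S → ℝ} {θ : ℝ} {y : S}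
    (hf : ∀ x, 0 ≤ f x) (hfy : 1 ≤ f y) (hθ₀ : 0 ≤ θ) (hθ₁ : θ < 1)
    (hdrift : ∀ x, ∑ z ∈ G.neighborFinset x, p x z * f z ≤ θ * f x) (x : S) :
    Summable (fun n => pn p n x y) :=
  .of_nonneg_of_le (fun n => pn_nonneg hp n x y)
    (pn_le_pow_mul_of_drift G hp hp_zero hf hfy hθ₀ hdrift · x)
    ((summable_geometric_of_lt_one hθ₀ hθ₁).mul_right (f x))

end Kernel

section Tree

variable {S : Type*} {G : SimpleGraph S} [∀ x : S, Fintype (G.neighborSet x)] {p : S → S → ℝ}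

lemma sum_mul_pow_dist_le (hG : G.IsTree) (hp_sum : ∀ x, ∑ y ∈ G.neighborFinset x, p x y = 1)
    {a L : ℝ} (ha : 0 ≤ a) (hpa : ∀ x z, G.Adj x z → p x z ≤ a) (hL₀ : 0 < L) (hL₁ : L ≤ 1)
    (x y : S) :
    ∑ z ∈ G.neighborFinset x, p x z * L ^ G.dist z y ≤ (a / L + (1 - a) * L) * L ^ G.dist x y := by
  by_cases hxy : x = y
  · subst hxy
    have hsum : ∑ z ∈ G.neighborFinset x, p x z * L ^ G.dist z x = L := by
      rw [Finset.sum_congr rfl fun z hz => by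
        rw [SimpleGraph.dist_eq_one_iff_adj.mpr ((G.mem_neighborFinset x z).mp hz).symm, pow_one],
        ← Finset.sum_mul, hp_sum x, one_mul]
    have hLL : a * L ≤ a / L := by
      rw [le_div_iff₀ hL₀, mul_assoc]
      exact mul_le_of_le_one_right ha (mul_le_one₀ hL₁ hL₀.le hL₁)
    rw [hsum, SimpleGraph.dist_self, pow_zero, mul_one]
    linarith
  · obtain ⟨c, hc, hcloser, hfarther⟩ := hG.exists_adj_dist_add_one_eq hxy
    have hc_mem : c ∈ G.neighborFinset x := (G.mem_neighborFinset x c).mpr hc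
    set m := G.dist c y
    have hrest : ∑ z ∈ (G.neighborFinset x).erase c, p x z * L ^ G.dist z y
        = (1 - p x c) * L ^ (m + 2) := by
      rw [← hp_sum x, ← Finset.add_sum_erase _ _ hc_mem, add_sub_cancel_left, Finset.sum_mul]
      refine Finset.sum_congr rfl fun z hz => ?_
      obtain ⟨hzc, hz⟩ := Finset.mem_erase.mp hz
      rw [hfarther z ((G.mem_neighborFinset x z).mp hz) hzc, ← hcloser]
    have hpow : L ^ (m + 2) ≤ L ^ m := pow_le_pow_of_le_one hL₀.le hL₁ (by omega)
    calc ∑ z ∈ G.neighborFinset x, p x z * L ^ G.dist z y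
        = p x c * L ^ m + (1 - p x c) * L ^ (m + 2) := by
          rw [← Finset.add_sum_erase _ _ hc_mem, hrest]
      _ ≤ a * L ^ m + (1 - a) * L ^ (m + 2) := by
          nlinarith [mul_le_mul_of_nonneg_right (hpa x c hc) (sub_nonneg.mpr hpow)]
      _ = (a / L + (1 - a) * L) * L ^ G.dist x y := by
          rw [← hcloser]; field_simp; ring

theorem summable_pn_of_isTree (hG : G.IsTree) (hp : ∀ x y, 0 ≤ p x y)
    (hp_zero : ∀ x y, ¬ G.Adj x y → p x y = 0)
    (hp_sum : ∀ x, ∑ y ∈ G.neighborFinset x, p x y = 1) {a : ℝ} (ha₀ : 0 ≤ a) (ha : a < 1 / 2)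
    (hpa : ∀ x z, G.Adj x z → p x z ≤ a) (x y : S) :
    Summable (fun n => pn p n x y) := by
  set L := 1 / 2 + a with hL
  have hL₀ : 0 < L := by positivity
  -- `a + (1 - a) L² - L = -(1/2 - a)² (1 + a)` for this choice of `L`
  have hθ : a / L + (1 - a) * L < 1 := by
    rw [div_add' _ _ _ hL₀.ne', div_lt_one hL₀, hL]
    nlinarith [mul_pos (pow_pos (sub_pos.mpr ha) 2) (by linarith : (0 : ℝ) < 1 + a)]
  refine summable_pn_of_drift G hp hp_zero (f := fun z => L ^ G.dist z y) (θ := a / L + (1 - a) * L)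
    (fun z => by positivity) (by simp)
    (add_nonneg (div_nonneg ha₀ hL₀.le) (mul_nonneg (by linarith) hL₀.le)) hθ
    (fun z => sum_mul_pow_dist_le hG hp_sum ha₀ hpa hL₀ (by linarith) z y) x

end Tree

/-- Under hypothesis (H) the walk is transient: the Green
series `G(x,y) = ∑_n p_n(x,y)` converges for all `x, y`. -/
theorem transient_of_H
    {S : Type*} [Countable S] (G : SimpleGraph S)
    [∀ x : S, Fintype (G.neighborSet x)]
    (hconn : G.Connected) (hacyc : G.IsAcyclic)
    (p : S → S → ℝ)
    (hp_pos : ∀ x y, 0 < p x y ↔ G.Adj x y)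
    (hp_zero : ∀ x y, ¬ G.Adj x y → p x y = 0)
    (hp_sum : ∀ x, ∑ y ∈ G.neighborFinset x, p x y = 1)
    (ε η : ℝ) (hε : 0 < ε) (hη : 0 < η)
    (hH : ∀ x y, G.Adj x y → ε ≤ p x y ∧ p x y ≤ 1 / 2 - η) :
    ∀ x y : S, Summable (fun n => pn p n x y) := by
  intro x y
  have hp : ∀ x y, 0 ≤ p x y := fun x y => by
    by_cases h : G.Adj x y
    · exact ((hp_pos x y).mpr h).le
    · exact (hp_zero x y h).ge
  obtain ⟨z, hz⟩ : (G.neighborFinset x).Nonempty :=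
    Finset.nonempty_of_sum_ne_zero (by rw [hp_sum x]; exact one_ne_zero)
  have ha₀ : 0 ≤ 1 / 2 - η := (hp x z).trans (hH x z ((G.mem_neighborFinset x z).mp hz)).2
  exact summable_pn_of_isTree ⟨hconn, hacyc⟩ hp hp_zero hp_sum ha₀ (by linarith)
    (fun x z h => (hH x z h).2) x y

end
end

section
/- If z lies on the geodesic from x to y, i.e. d(x,z) + d(z,y) = d(x,y), then H(x,y) = H(x,z) · H(z,y), where H(a,b) = P_a[∃ n ≥ 0, X_n = b] is the probability that the chain started at a ever hits b. -/
/-!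
On a tree every walk from `x` to `y` passes through a vertex `z` of the geodesic between them.
The probability of ever hitting `b` from `a` is the total weight of the first-passage walks from
`a` to `b`, the weight of a walk being the product of its transition probabilities: the event
splits according to the trajectory up to the first visit to `b`, and the cylinders whose weight
is not zero are exactly those of such walks. Cutting a first-passage walk from `x` to `y` at its
first visit to `z` is a bijection onto pairs of first-passage walks `x → z` and `z → y`, and
weights are multiplicative under concatenation.
-/

open MeasureTheory
open scoped Classical ENNReal

noncomputable section

lemma List.getD_append_singleton_self {α : Type*} (l : List α) (d : α) (k : ℕ) :
    (l ++ [d]).getD k d = l.getD k d := by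
  rcases lt_or_ge k l.length with hk | hk
  · exact getD_append _ _ _ _ hk
  · rw [getD_append_right _ _ _ _ hk, getD_eq_default _ _ hk]
    simp [List.getD_eq_getElem?_getD]

section Trajectory

variable {V : Type*}

/-- The trajectories beginning with `l ++ [b]`: `getD` supplies `b` at time `l.length`. -/
def pathCylinder (b : V) (l : List V) : Set (ℕ → V) :=
  {ω | ∀ k ≤ l.length, ω k = l.getD k b}

variable {b : V} {l l' : List V} {ω : ℕ → V}

lemma getElem_eq_of_mem_pathCylinder (hω : ω ∈ pathCylinder b l) (k : ℕ) (hk : k < l.length) :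
    ω k = l[k] := by
  rw [hω k hk.le, List.getD_eq_getElem _ _ hk]

lemma eq_of_mem_pathCylinder (hω : ω ∈ pathCylinder b l) : ω l.length = b := by
  rw [hω _ le_rfl, List.getD_eq_default _ _ le_rfl]

lemma length_le_of_mem_pathCylinder (hl' : b ∉ l') (hω : ω ∈ pathCylinder b l)
    (hω' : ω ∈ pathCylinder b l') : l'.length ≤ l.length := by
  by_contra! h
  have hmem := List.getElem_mem h
  rw [← getElem_eq_of_mem_pathCylinder hω' _ h, eq_of_mem_pathCylinder hω] at hmem
  exact hl' hmem

variable (b)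

lemma pairwise_disjoint_pathCylinder :
    Pairwise (Function.onFun Disjoint fun l : {l : List V // b ∉ l} => pathCylinder b l.1) := by
  rintro ⟨l, hl⟩ ⟨l', hl'⟩ hne
  refine Set.disjoint_left.2 fun ω hω hω' => hne (Subtype.ext ?_)
  have hlen := (length_le_of_mem_pathCylinder hl hω' hω).antisymm
    (length_le_of_mem_pathCylinder hl' hω hω')
  refine List.ext_getElem hlen fun k hk hk' => ?_
  rw [← getElem_eq_of_mem_pathCylinder hω k hk, getElem_eq_of_mem_pathCylinder hω' k hk']

lemma setOf_exists_eq_eq_iUnion_pathCylinder :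
    {ω : ℕ → V | ∃ n, ω n = b} = ⋃ l : {l : List V // b ∉ l}, pathCylinder b l.1 := by
  ext ω
  simp only [Set.mem_ofPred_eq, Set.mem_iUnion]
  constructor
  · intro h
    obtain ⟨hn, hmin⟩ : ω (Nat.find h) = b ∧ ∀ k < Nat.find h, ω k ≠ b :=
      ⟨Nat.find_spec h, fun k => Nat.find_min h⟩
    refine ⟨⟨List.ofFn fun k : Fin (Nat.find h) => ω k, ?_⟩, fun k hk => ?_⟩
    · simp only [List.mem_ofFn, not_exists]
      exact fun k => hmin k k.2
    · rcases hk.lt_or_eq with hk | rfl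
      · rw [List.getD_eq_getElem _ _ hk, List.getElem_ofFn]
      · rw [List.getD_eq_default _ _ le_rfl, List.length_ofFn, hn]
  · rintro ⟨l, hω⟩
    exact ⟨_, eq_of_mem_pathCylinder hω⟩

variable [MeasurableSpace V] [MeasurableSingletonClass V]

lemma measurableSet_pathCylinder (l : List V) : MeasurableSet (pathCylinder b l) := by
  simp only [pathCylinder, Set.ofPred_forall]
  exact .iInter fun k => .iInter fun _ => measurable_pi_apply k (measurableSet_singleton _)

theorem measure_exists_eq_eq_tsum_pathCylinder [Countable V] (μ : Measure (ℕ → V)) :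
    μ {ω | ∃ n, ω n = b} = ∑' l : {l : List V // b ∉ l}, μ (pathCylinder b l) := by
  rw [setOf_exists_eq_eq_iUnion_pathCylinder,
    measure_iUnion (pairwise_disjoint_pathCylinder b) (measurableSet_pathCylinder b ·)]

end Trajectory

namespace SimpleGraph

variable {V : Type*} {G : SimpleGraph V}

theorem IsAcyclic.mem_support_of_dist_add_dist_eq (hacyc : G.IsAcyclic) (hconn : G.Connected)
    {x y z : V} (hd : G.dist x z + G.dist z y = G.dist x y) (w : G.Walk x y) : z ∈ w.support := by
  obtain ⟨q, hq⟩ := hconn.exists_walk_length_eq_dist x z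
  obtain ⟨r, hr⟩ := hconn.exists_walk_length_eq_dist z y
  have hqr : (q.append r).IsPath :=
    Walk.isPath_of_length_eq_dist _ (by rw [Walk.length_append, hq, hr, hd])
  have hbypass : w.bypass = q.append r :=
    congrArg Subtype.val ((hacyc.subsingleton_path x y).elim ⟨_, w.bypass_isPath⟩ ⟨_, hqr⟩)
  refine w.support_bypass_subset_support ?_
  rw [hbypass, Walk.mem_support_append_iff]
  exact .inl q.end_mem_support

namespace Walk

def IsFirstPassage {u v : V} (w : G.Walk u v) : Prop :=
  ∀ k < w.length, w.getVert k ≠ v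

variable {u v w : V}

lemma isFirstPassage_cons_iff (h : G.Adj u v) (q : G.Walk v w) :
    (cons h q).IsFirstPassage ↔ u ≠ w ∧ q.IsFirstPassage := by
  simp only [IsFirstPassage, length_cons]
  refine ⟨fun hq => ⟨hq 0 (by omega), fun k hk => ?_⟩, fun ⟨huw, hq⟩ k hk => ?_⟩
  · simpa using hq (k + 1) (by omega)
  · cases k with
    | zero => simpa using huw
    | succ k => simpa using hq k (by omega)

lemma isFirstPassage_append_iff (p : G.Walk u v) (q : G.Walk v w) :
    (p.append q).IsFirstPassage ↔ (∀ k < p.length, p.getVert k ≠ w) ∧ q.IsFirstPassage := by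
  simp only [IsFirstPassage, length_append, getVert_append]
  refine ⟨fun h => ⟨fun k hk => ?_, fun k hk => ?_⟩, fun ⟨hp, hq⟩ k hk => ?_⟩
  · simpa [hk] using h k (by omega)
  · simpa using h (p.length + k) (by omega)
  · split_ifs with hkp
    · exact hp k hkp
    · exact hq _ (by omega)

lemma IsFirstPassage.getVert_ne_of_forall_mem_support {x y z : V}
    (hz : ∀ w : G.Walk x y, z ∈ w.support) {p : G.Walk x z} (hp : p.IsFirstPassage) :
    ∀ k < p.length, p.getVert k ≠ y := by
  intro k hk hky
  obtain ⟨n, hn, -⟩ := mem_support_iff_exists_getVert.mp (hz ((p.take k).copy rfl hky))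
  rw [getVert_copy, take_getVert] at hn
  exact hp _ (lt_of_le_of_lt inf_le_left hk) hn

section Decomp

variable [DecidableEq V]

lemma isFirstPassage_takeUntil (p : G.Walk u v) (h : w ∈ p.support) :
    (p.takeUntil w h).IsFirstPassage := fun k hk => by
  rw [getVert_takeUntil h hk.le]
  exact getVert_lt_length_takeUntil_ne h hk

lemma IsFirstPassage.dropUntil {p : G.Walk u v} (hp : p.IsFirstPassage) (h : w ∈ p.support) :
    (p.dropUntil w h).IsFirstPassage := by
  rw [← take_spec p h, isFirstPassage_append_iff] at hp
  exact hp.2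

lemma IsFirstPassage.takeUntil_append {p : G.Walk u v} (hp : p.IsFirstPassage)
    (q : G.Walk v w) (h : v ∈ (p.append q).support) : (p.append q).takeUntil v h = p := by
  induction p with
  | nil => exact takeUntil_first q
  | cons hadj p ih =>
    rw [isFirstPassage_cons_iff] at hp
    simp only [cons_append, Walk.takeUntil, hp.1, dite_false]
    exact congrArg _ (ih hp.2 _ _)

lemma IsFirstPassage.dropUntil_append {p : G.Walk u v} (hp : p.IsFirstPassage)
    (q : G.Walk v w) (h : v ∈ (p.append q).support) : (p.append q).dropUntil v h = q := by
  induction p with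
  | nil => exact dropUntil_first q h
  | cons hadj p ih =>
    rw [isFirstPassage_cons_iff] at hp
    simp only [cons_append, Walk.dropUntil, hp.1, dite_false]
    exact ih hp.2 _ _

def firstPassageAppendEquiv {x y z : V} (hz : ∀ w : G.Walk x y, z ∈ w.support) :
    {p : G.Walk x z // p.IsFirstPassage} × {q : G.Walk z y // q.IsFirstPassage} ≃
      {w : G.Walk x y // w.IsFirstPassage} where
  toFun pq := ⟨pq.1.1.append pq.2.1, (isFirstPassage_append_iff _ _).2
    ⟨pq.1.2.getVert_ne_of_forall_mem_support hz, pq.2.2⟩⟩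
  invFun w := (⟨w.1.takeUntil z (hz w.1), isFirstPassage_takeUntil _ _⟩,
    ⟨w.1.dropUntil z (hz w.1), w.2.dropUntil _⟩)
  left_inv := by
    rintro ⟨⟨p, hp⟩, ⟨q, hq⟩⟩
    ext1 <;> ext1
    · exact hp.takeUntil_append q _
    · exact hp.dropUntil_append q _
  right_inv := by
    rintro ⟨w, hw⟩
    ext1
    exact take_spec w (hz w)

end Decomp

section Weight

variable (p : V → V → ℝ)

def weight (q : G.Walk u v) : ℝ := (q.darts.map fun d => p d.fst d.snd).prod

lemma weight_append (q : G.Walk u v) (r : G.Walk v w) :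
    (q.append r).weight p = q.weight p * r.weight p := by
  simp [weight, darts_append]

lemma weight_eq_prod_getVert (q : G.Walk u v) :
    q.weight p = ∏ k ∈ Finset.range q.length, p (q.getVert k) (q.getVert (k + 1)) := by
  induction q with
  | nil => simp [weight]
  | cons h q ih =>
    simp only [weight, darts_cons, List.map_cons, List.prod_cons] at ih ⊢
    rw [ih, length_cons, Finset.prod_range_succ']
    simp [mul_comm]

variable {p}

lemma weight_nonneg (hp : ∀ a b, 0 ≤ p a b) (q : G.Walk u v) : 0 ≤ q.weight p :=
  List.prod_nonneg (by simp [hp])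

theorem tsum_weight_isFirstPassage_eq_mul (hp : ∀ a b, 0 ≤ p a b) {x y z : V}
    (hz : ∀ w : G.Walk x y, z ∈ w.support) :
    ∑' w : {w : G.Walk x y // w.IsFirstPassage}, ENNReal.ofReal (w.1.weight p) =
      (∑' q : {q : G.Walk x z // q.IsFirstPassage}, ENNReal.ofReal (q.1.weight p)) *
        ∑' r : {r : G.Walk z y // r.IsFirstPassage}, ENNReal.ofReal (r.1.weight p) := by
  rw [← (firstPassageAppendEquiv hz).tsum_eq, ENNReal.tsum_prod', ← ENNReal.tsum_mul_right]
  congr 1 with q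
  rw [← ENNReal.tsum_mul_left]
  congr 1 with r
  simp [firstPassageAppendEquiv, weight_append, ENNReal.ofReal_mul (weight_nonneg hp _)]

end Weight

section Trajectory

lemma getD_dropLast_support (q : G.Walk u v) (k : ℕ) :
    q.support.dropLast.getD k v = q.getVert k := by
  rw [getVert_eq_getD_support, ← List.getD_append_singleton_self, dropLast_support_concat]

lemma pathCylinder_dropLast_support (q : G.Walk u v) :
    pathCylinder v q.support.dropLast = {ω | ∀ k ≤ q.length, ω k = q.getVert k} := by
  simp only [pathCylinder, getD_dropLast_support, List.length_dropLast, length_support,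
    Nat.add_sub_cancel]

lemma IsFirstPassage.notMem_dropLast_support {q : G.Walk u v} (hq : q.IsFirstPassage) :
    v ∉ q.support.dropLast := fun h => by
  obtain ⟨k, hk, hkv⟩ := List.getElem_of_mem h
  rw [← List.getD_eq_getElem _ v hk, getD_dropLast_support] at hkv
  exact hq k (by simpa using hk) hkv

lemma exists_support_eq_append_singleton {l : List V} (h0 : l.getD 0 v = u)
    (hadj : ∀ k < l.length, G.Adj (l.getD k v) (l.getD (k + 1) v)) :
    ∃ q : G.Walk u v, q.support = l ++ [v] := by
  have hne : l ++ [v] ≠ [] := by simp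
  have hchain : (l ++ [v]).IsChain G.Adj := by
    refine List.isChain_iff_getElem.2 fun k hk => ?_
    simp only [← List.getD_eq_getElem _ v, List.getD_append_singleton_self]
    exact hadj k (by simpa using hk)
  have hhead : (l ++ [v]).head hne = u := by
    rw [List.head_eq_getElem, ← List.getD_eq_getElem _ v, List.getD_append_singleton_self, h0]
  exact ⟨(ofSupport _ hne hchain).copy hhead List.getLast_concat, by simp⟩

variable [MeasurableSpace V] {p : V → V → ℝ} {μ : Measure (ℕ → V)}

lemma measure_pathCylinder_dropLast_support
    (hμ : ∀ (n : ℕ) (f : ℕ → V), μ {ω | ∀ k ≤ n, ω k = f k} =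
      ENNReal.ofReal ((if f 0 = u then 1 else 0) * ∏ k ∈ Finset.range n, p (f k) (f (k + 1))))
    (q : G.Walk u v) : μ (pathCylinder v q.support.dropLast) = ENNReal.ofReal (q.weight p) := by
  rw [pathCylinder_dropLast_support, hμ, getVert_zero, if_pos rfl, one_mul, weight_eq_prod_getVert]

theorem tsum_weight_isFirstPassage_eq_tsum_measure_pathCylinder
    (hp_zero : ∀ x y, ¬ G.Adj x y → p x y = 0)
    (hμ : ∀ (n : ℕ) (f : ℕ → V), μ {ω | ∀ k ≤ n, ω k = f k} =
      ENNReal.ofReal ((if f 0 = u then 1 else 0) * ∏ k ∈ Finset.range n, p (f k) (f (k + 1))))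
    (v : V) :
    ∑' q : {q : G.Walk u v // q.IsFirstPassage}, ENNReal.ofReal (q.1.weight p) =
      ∑' l : {l : List V // v ∉ l}, μ (pathCylinder v l) := by
  let toList (q : {q : G.Walk u v // q.IsFirstPassage}) : {l : List V // v ∉ l} :=
    ⟨q.1.support.dropLast, q.2.notMem_dropLast_support⟩
  have hinj : Function.Injective toList := fun q q' h => by
    refine Subtype.ext (ext_support ?_)
    rw [← dropLast_support_concat, ← dropLast_support_concat q'.1]
    exact congrArg (· ++ [v]) (congrArg Subtype.val h)
  rw [← hinj.tsum_eq]
  · exact tsum_congr fun q => (measure_pathCylinder_dropLast_support hμ q.1).symm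
  -- a cylinder of positive measure starts at `u` and moves along edges, so it comes from a walk
  rintro ⟨l, hl⟩ hne
  rw [Function.mem_support] at hne
  unfold pathCylinder at hne
  rw [hμ] at hne
  have h0 : l.getD 0 v = u := by
    by_contra h
    rw [if_neg h, zero_mul, ENNReal.ofReal_zero] at hne
    exact hne rfl
  have hadj : ∀ k < l.length, G.Adj (l.getD k v) (l.getD (k + 1) v) := fun k hk => by
    by_contra h
    rw [Finset.prod_eq_zero (Finset.mem_range.2 hk) (hp_zero _ _ h)] at hne
    simp at hne
  obtain ⟨q, hq⟩ := exists_support_eq_append_singleton h0 hadj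
  have hlen : q.length = l.length := by simpa using congrArg List.length hq
  have hfp : q.IsFirstPassage := fun k hk hkv => by
    rw [getVert_eq_getD_support, hq, List.getD_append_singleton_self,
      List.getD_eq_getElem _ _ (hlen ▸ hk)] at hkv
    exact hl (hkv ▸ List.getElem_mem _)
  exact ⟨⟨q, hfp⟩, Subtype.ext (by simp [toList, hq])⟩

end Trajectory

end Walk

end SimpleGraph

/-- If `z` lies on the geodesic from `x` to `y`, then
`H(x,y) = H(x,z) ⬝ H(z,y)`, where `H(a,b)` is the probability that the chain
started at `a` ever hits `b`. The laws `P x` of the canonical chain are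
characterised by their values on cylinder sets. -/
theorem hit_mul_of_mem_geodesic
    {S : Type*} [Countable S] [MeasurableSpace S] [MeasurableSingletonClass S]
    (G : SimpleGraph S) [∀ x : S, Fintype (G.neighborSet x)]
    (hconn : G.Connected) (hacyc : G.IsAcyclic)
    (p : S → S → ℝ)
    (hp_pos : ∀ x y, 0 < p x y ↔ G.Adj x y)
    (hp_zero : ∀ x y, ¬ G.Adj x y → p x y = 0)
    (hp_sum : ∀ x, ∑ y ∈ G.neighborFinset x, p x y = 1)
    (P : S → Measure (ℕ → S)) (hPprob : ∀ x, IsProbabilityMeasure (P x))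
    (hP : ∀ (x : S) (n : ℕ) (f : ℕ → S),
      P x {ω | ∀ k ≤ n, ω k = f k} =
        ENNReal.ofReal ((if f 0 = x then 1 else 0) *
          ∏ k ∈ Finset.range n, p (f k) (f (k + 1)))) :
    ∀ x y z : S, G.dist x z + G.dist z y = G.dist x y →
      (P x {ω | ∃ n, ω n = y}).toReal =
        (P x {ω | ∃ n, ω n = z}).toReal * (P z {ω | ∃ n, ω n = y}).toReal := by
  intro x y z hd
  have hp_nonneg (a b : S) : 0 ≤ p a b := by
    by_cases h : G.Adj a b
    · exact ((hp_pos a b).2 h).le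
    · exact (hp_zero a b h).ge
  have hit (a b : S) : P a {ω | ∃ n, ω n = b} =
      ∑' q : {q : G.Walk a b // q.IsFirstPassage}, ENNReal.ofReal (q.1.weight p) := by
    rw [measure_exists_eq_eq_tsum_pathCylinder,
      SimpleGraph.Walk.tsum_weight_isFirstPassage_eq_tsum_measure_pathCylinder hp_zero (hP a)]
  rw [← ENNReal.toReal_mul, hit, hit, hit, SimpleGraph.Walk.tsum_weight_isFirstPassage_eq_mul
    hp_nonneg (hacyc.mem_support_of_dist_add_dist_eq hconn hd)]
end
end

section
/- Under hypothesis (H), fix a geodesic ray γ from o and c ∈ ℕ. There exists a constant β < ∞, depending only on ε, η and c, such that for every z ∈ S and every y ∈ S with d(y, π(y)) ≤ c: G(z,y) ≤ β · G(o,y) · K(z), where K(z) = G(z,π(z))/G(o,π(z)) is the Martin kernel along γ. -/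
/-!
Under (H) a step towards a fixed target has probability at most `q = 1/2 - η`, so for a suitable
`μ < 1` the function `μ ^ d(·, y)` is `r`-superharmonic with `r < 1`; hence `p_n(x, y) ≤ r ^ n`
and the Green function is bounded by some `M`, while `G(x, y) ≥ ε ^ d(x, y)`. In a tree a walk
from `x` to `y` must pass through every vertex `w` of the geodesic between them, which gives
`G(x, y) G(w, w) = G(x, w) G(w, y)`. On the ray, `d(x, γ n) = d(x, π x) + |n - k x|`, so the
inequality for `y` on the ray follows by factorizing through `π z` and `y`. For general `y`,
`π y` lies between `o` and `y` and within distance `c` of `y`, and a Harnack inequality moves the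
target from `y` to `π y` at the cost of a factor `(M / ε) ^ c`.
-/

open scoped Classical

noncomputable section

/-- The Green function `G(x,y) = ∑_n p_n(x,y)`. -/
def green {S : Type*} (p : S → S → ℝ) (x y : S) : ℝ := ∑' n, pn p n x y

open Finset

lemma Nat.eq_add_of_forall_le_of_no_peak {f : ℕ → ℕ} {k : ℕ}
    (hstep : ∀ n, f n = f (n + 1) + 1 ∨ f (n + 1) = f n + 1)
    (hpeak : ∀ n, ¬ (f n + 1 = f (n + 1) ∧ f (n + 2) + 1 = f (n + 1)))
    (hmin : ∀ n, f k ≤ f n) (n : ℕ) : f n = f k + (n - k) + (k - n) := by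
  have up : ∀ d, f (k + d + 1) = f (k + d) + 1 := by
    intro d
    induction d with
    | zero => have := hmin (k + 1); rcases hstep k with h | h <;> omega
    | succ d ih =>
      have := hpeak (k + d)
      rcases hstep (k + d + 1) with h | h <;> grind
  have down : ∀ d < k, f (k - d - 1) = f (k - d) + 1 := by
    intro d
    induction d with
    | zero =>
      intro hk
      have := hmin (k - 1)
      rcases hstep (k - 1) with h | h <;> rw [Nat.sub_add_cancel hk] at h <;> omega
    | succ d ih =>
      intro hk
      have := hpeak (k - d - 2)
      rcases hstep (k - d - 2) with h | h <;> grind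
  rcases le_total k n with hkn | hnk
  · obtain ⟨d, rfl⟩ := Nat.exists_eq_add_of_le hkn
    induction d with
    | zero => simp
    | succ d ih => rw [← add_assoc, up d, ih (by omega)]; omega
  · obtain ⟨d, hdk, rfl⟩ : ∃ d ≤ k, n = k - d := ⟨k - n, by omega, by omega⟩
    induction d with
    | zero => simp
    | succ d ih => rw [← Nat.sub_sub, down d (by omega), ih (by omega) (by omega)]; omega

namespace SimpleGraph

variable {V : Type*} {G : SimpleGraph V}

lemma Connected.exists_adj_dist_add_one (hG : G.Connected) {u x : V} (hxu : x ≠ u) :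
    ∃ z, G.Adj x z ∧ G.dist u z + 1 = G.dist u x := by
  obtain ⟨W, hW⟩ := hG.exists_walk_length_eq_dist x u
  cases W with
  | nil => exact absurd rfl hxu
  | @cons _ v _ h q =>
    refine ⟨v, h, ?_⟩
    have hq := G.dist_le q
    have htri := hG.dist_triangle (u := x) (v := v) (w := u)
    rw [dist_eq_one_iff_adj.mpr h, Walk.length_cons] at *
    rw [dist_comm (u := u), dist_comm (u := u)]
    omega

lemma IsTree.eq_of_adj_of_dist_add_one (hG : G.IsTree) {u x a b : V} (ha : G.Adj x a)
    (hb : G.Adj x b) (hua : G.dist u a + 1 = G.dist u x) (hub : G.dist u b + 1 = G.dist u x) :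
    a = b := by
  have geodesic_through : ∀ c, G.Adj x c → G.dist u c + 1 = G.dist u x →
      ∃ P : G.Path x u, P.1.snd = c := by
    intro c hc huc
    obtain ⟨q, hq, hqlen⟩ := hG.connected.exists_path_of_dist c u
    have hx : x ∉ q.support := fun hx => by
      have := G.dist_le (q.dropUntil x hx)
      have := q.length_dropUntil_le_length hx
      rw [dist_comm, dist_comm (u := u)] at huc
      omega
    exact ⟨⟨q.cons hc, hq.cons hx⟩, Walk.snd_cons q hc⟩
  obtain ⟨P, rfl⟩ := geodesic_through a ha hua
  obtain ⟨Q, rfl⟩ := geodesic_through b hb hub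
  rw [(hG.isAcyclic.subsingleton_path x u).elim P Q]

lemma IsTree.dist_eq_add_one_of_adj_of_ne (hG : G.IsTree) {u x z₀ z : V} (hxz₀ : G.Adj x z₀)
    (hz₀ : G.dist u z₀ + 1 = G.dist u x) (hxz : G.Adj x z) (hne : z ≠ z₀) :
    G.dist u z = G.dist u x + 1 :=
  (hG.dist_eq_dist_add_one_of_adj u hxz).resolve_left fun h =>
    hne (hG.eq_of_adj_of_dist_add_one hxz hxz₀ h.symm hz₀)

lemma IsTree.dist_add_dist_eq_of_adj (hG : G.IsTree) {x y w z : V}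
    (hw : G.dist x w + G.dist w y = G.dist x y) (hxw : x ≠ w) (hxz : G.Adj x z) :
    G.dist z w + G.dist w y = G.dist z y := by
  have hzx : G.dist z x = 1 := dist_eq_one_iff_adj.mpr hxz.symm
  have t₁ := hG.connected.dist_triangle (u := z) (v := w) (w := y)
  have t₂ := hG.connected.dist_triangle (u := z) (v := x) (w := w)
  have c₁ : G.dist y z = G.dist z y := dist_comm
  have c₂ : G.dist y x = G.dist x y := dist_comm
  rcases hG.dist_eq_dist_add_one_of_adj y hxz with hcloser | hfarther
  · -- The neighbour of `x` towards `y` is also the one towards `w`.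
    obtain ⟨z', hxz', hz'⟩ := hG.connected.exists_adj_dist_add_one hxw
    have c₃ : G.dist w z' = G.dist z' w := dist_comm
    have c₄ : G.dist w x = G.dist x w := dist_comm
    have hz'y : G.dist y z' + 1 = G.dist y x := by
      have t₃ := hG.connected.dist_triangle (u := y) (v := w) (w := z')
      have c₅ : G.dist y w = G.dist w y := dist_comm
      rcases hG.dist_eq_dist_add_one_of_adj y hxz' with h | h <;> omega
    obtain rfl := hG.eq_of_adj_of_dist_add_one hxz hxz' hcloser.symm hz'y
    omega
  · omega

def IsGeodesicRay (G : SimpleGraph V) (γ : ℕ → V) : Prop :=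
  ∀ m n : ℕ, (G.dist (γ m) (γ n) : ℤ) = |(m : ℤ) - (n : ℤ)|

namespace IsGeodesicRay

variable {γ : ℕ → V}

lemma dist_of_le (hγ : IsGeodesicRay G γ) {m n : ℕ} (hmn : m ≤ n) :
    G.dist (γ m) (γ n) = n - m := by
  have h := hγ m n
  rw [abs_sub_comm, abs_of_nonneg (by omega)] at h
  zify [hmn]
  exact h

lemma adj_succ (hγ : IsGeodesicRay G γ) (n : ℕ) : G.Adj (γ n) (γ (n + 1)) :=
  dist_eq_one_iff_adj.mp (by rw [hγ.dist_of_le n.le_succ]; omega)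

lemma injective (hγ : IsGeodesicRay G γ) : Function.Injective γ := by
  intro m n hmn
  have h := hγ m n
  rw [hmn, dist_self, Nat.cast_zero, eq_comm, abs_eq_zero, sub_eq_zero] at h
  exact_mod_cast h

lemma dist_eq_of_forall_le (hG : G.IsTree) (hγ : IsGeodesicRay G γ) {x : V} {k : ℕ}
    (hk : ∀ n, G.dist x (γ k) ≤ G.dist x (γ n)) (n : ℕ) :
    G.dist x (γ n) = G.dist x (γ k) + (n - k) + (k - n) :=
  Nat.eq_add_of_forall_le_of_no_peak (f := fun n => G.dist x (γ n))
    (fun n => hG.dist_eq_dist_add_one_of_adj x (hγ.adj_succ n))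
    (fun n ⟨h₁, h₂⟩ => by
      have := hG.eq_of_adj_of_dist_add_one (hγ.adj_succ n).symm (hγ.adj_succ (n + 1)) h₁ h₂
      exact absurd (hγ.injective this) (by omega)) hk n

end IsGeodesicRay

end SimpleGraph


section RandomWalk

variable {S : Type*}

structure IsNearestNeighbourWalk (G : SimpleGraph S) [∀ x, Fintype (G.neighborSet x)]
    (p : S → S → ℝ) : Prop where
  nonneg : ∀ x y, 0 ≤ p x y
  eq_zero_of_not_adj : ∀ x y, ¬ G.Adj x y → p x y = 0
  sum_eq_one : ∀ x, ∑ y ∈ G.neighborFinset x, p x y = 1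

/-- `firstPassage p n x w` is the probability that the walk started at `x` first visits `w` at
time `n`. -/
def firstPassage (p : S → S → ℝ) : ℕ → S → S → ℝ
  | 0, x, w => if x = w then 1 else 0
  | n + 1, x, w => if x = w then 0 else ∑' z, p x z * firstPassage p n z w

lemma self_le_div_add_one_sub_mul {q μ : ℝ} (hq : 0 ≤ q) (hμ0 : 0 < μ) (hμ1 : μ ≤ 1) :
    μ ≤ q / μ + (1 - q) * μ := by
  rw [div_add' _ _ _ hμ0.ne', le_div_iff₀ hμ0]
  nlinarith [mul_nonneg hq (mul_nonneg hμ0.le (sub_nonneg.2 hμ1))]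

namespace IsNearestNeighbourWalk

open SimpleGraph

variable {G : SimpleGraph S} [∀ x, Fintype (G.neighborSet x)] {p : S → S → ℝ}

lemma pn_succ (hp : IsNearestNeighbourWalk G p) (n : ℕ) (x y : S) :
    pn p (n + 1) x y = ∑ z ∈ G.neighborFinset x, p x z * pn p n z y :=
  tsum_eq_sum fun z hz => by
    rw [hp.eq_zero_of_not_adj x z (by simpa using hz), zero_mul]

lemma firstPassage_succ_of_ne (hp : IsNearestNeighbourWalk G p) (n : ℕ) {x w : S} (hxw : x ≠ w) :
    firstPassage p (n + 1) x w = ∑ z ∈ G.neighborFinset x, p x z * firstPassage p n z w := by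
  rw [firstPassage, if_neg hxw]
  exact tsum_eq_sum fun z hz => by
    rw [hp.eq_zero_of_not_adj x z (by simpa using hz), zero_mul]

lemma pn_nonneg (hp : IsNearestNeighbourWalk G p) (n : ℕ) (x y : S) : 0 ≤ pn p n x y := by
  induction n generalizing x with
  | zero => unfold pn; split_ifs <;> norm_num
  | succ n ih => exact tsum_nonneg fun z => mul_nonneg (hp.nonneg x z) (ih z)

lemma firstPassage_nonneg (hp : IsNearestNeighbourWalk G p) (n : ℕ) (x w : S) :
    0 ≤ firstPassage p n x w := by
  induction n generalizing x with
  | zero => unfold firstPassage; split_ifs <;> norm_num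
  | succ n ih =>
    unfold firstPassage
    split_ifs
    · rfl
    · exact tsum_nonneg fun z => mul_nonneg (hp.nonneg x z) (ih z)

/-- In a tree every walk from `x` to `y` passes through `w`; split it at its first visit. -/
lemma pn_eq_sum_firstPassage (hp : IsNearestNeighbourWalk G p) (hG : G.IsTree) {w y : S}
    (n : ℕ) : ∀ x, G.dist x w + G.dist w y = G.dist x y →
      pn p n x y = ∑ m ∈ range (n + 1), firstPassage p m x w * pn p (n - m) w y := by
  induction n with
  | zero =>
    intro x hx
    by_cases hxw : x = w
    · subst hxw
      simp [firstPassage]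
    · have hxy : x ≠ y := by
        rintro rfl
        rw [dist_self] at hx
        exact hxw (hG.connected.dist_eq_zero_iff.mp (by omega))
      simp [firstPassage, pn, hxw, hxy]
  | succ n ih =>
    intro x hx
    rw [sum_range_succ']
    by_cases hxw : x = w
    · subst hxw
      simp [firstPassage]
    · rw [hp.pn_succ, firstPassage, if_neg hxw, zero_mul, add_zero]
      calc ∑ z ∈ G.neighborFinset x, p x z * pn p n z y
          = ∑ z ∈ G.neighborFinset x, ∑ m ∈ range (n + 1),
              p x z * (firstPassage p m z w * pn p (n - m) w y) := by
            refine sum_congr rfl fun z hz => ?_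
            rw [ih z (hG.dist_add_dist_eq_of_adj hx hxw ((mem_neighborFinset ..).mp hz)), mul_sum]
        _ = ∑ m ∈ range (n + 1), firstPassage p (m + 1) x w * pn p (n + 1 - (m + 1)) w y := by
            rw [sum_comm]
            refine sum_congr rfl fun m _ => ?_
            rw [hp.firstPassage_succ_of_ne m hxw, sum_mul, Nat.add_sub_add_right]
            exact sum_congr rfl fun z _ => by ring

lemma firstPassage_le_pn (hp : IsNearestNeighbourWalk G p) (hG : G.IsTree) (n : ℕ) (x w : S) :
    firstPassage p n x w ≤ pn p n x w := by
  rw [hp.pn_eq_sum_firstPassage hG (w := w) (y := w) n x (by rw [dist_self, add_zero])]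
  calc firstPassage p n x w = firstPassage p n x w * pn p (n - n) w w := by simp [pn]
    _ ≤ _ := single_le_sum (f := fun m => firstPassage p m x w * pn p (n - m) w w)
      (fun m _ => mul_nonneg (hp.firstPassage_nonneg m x w) (hp.pn_nonneg _ w w))
      (self_mem_range_succ n)

lemma green_eq_tsum_firstPassage_mul (hp : IsNearestNeighbourWalk G p) (hG : G.IsTree)
    (hsum : ∀ x y, Summable fun n => pn p n x y) {x w y : S}
    (hw : G.dist x w + G.dist w y = G.dist x y) :
    green p x y = (∑' m, firstPassage p m x w) * green p w y := by
  have hfp : Summable fun m => ‖firstPassage p m x w‖ := by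
    refine Summable.of_nonneg_of_le (fun m => norm_nonneg _) (fun m => ?_) (hsum x w)
    rw [Real.norm_of_nonneg (hp.firstPassage_nonneg m x w)]
    exact hp.firstPassage_le_pn hG m x w
  have hpn : Summable fun n => ‖pn p n w y‖ :=
    (hsum w y).congr fun n => (Real.norm_of_nonneg (hp.pn_nonneg n w y)).symm
  rw [green, green, tsum_mul_tsum_eq_tsum_sum_range_of_summable_norm hfp hpn]
  exact tsum_congr fun n => hp.pn_eq_sum_firstPassage hG n x hw

lemma green_mul_green_eq (hp : IsNearestNeighbourWalk G p) (hG : G.IsTree)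
    (hsum : ∀ x y, Summable fun n => pn p n x y) {x w y : S}
    (hw : G.dist x w + G.dist w y = G.dist x y) :
    green p x y * green p w w = green p x w * green p w y := by
  have hww : G.dist x w + G.dist w w = G.dist x w := by rw [dist_self, add_zero]
  rw [hp.green_eq_tsum_firstPassage_mul hG hsum hw,
    hp.green_eq_tsum_firstPassage_mul hG hsum hww]
  ring

/-- At most one neighbour of `x` is closer to `y`, and it is chosen with probability at most `q`. -/
lemma sum_mul_pow_dist_le (hp : IsNearestNeighbourWalk G p) (hG : G.IsTree) {q μ : ℝ}
    (hq : 0 ≤ q) (hpq : ∀ x y, G.Adj x y → p x y ≤ q) (hμ0 : 0 < μ) (hμ1 : μ ≤ 1) (x y : S) :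
    ∑ z ∈ G.neighborFinset x, p x z * μ ^ G.dist z y
      ≤ (q / μ + (1 - q) * μ) * μ ^ G.dist x y := by
  by_cases hxy : x = y
  · subst hxy
    have hnbr : ∀ z ∈ G.neighborFinset x, p x z * μ ^ G.dist z x = p x z * μ := fun z hz => by
      rw [dist_eq_one_iff_adj.mpr ((mem_neighborFinset ..).mp hz).symm, pow_one]
    rw [sum_congr rfl hnbr, ← sum_mul, hp.sum_eq_one, dist_self, pow_zero, one_mul, mul_one]
    exact self_le_div_add_one_sub_mul hq hμ0 hμ1
  · obtain ⟨z₀, hxz₀, hz₀⟩ := hG.connected.exists_adj_dist_add_one hxy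
    have hz₀mem : z₀ ∈ G.neighborFinset x := (mem_neighborFinset ..).mpr hxz₀
    have c₀ : G.dist y z₀ = G.dist z₀ y := dist_comm
    have c₁ : G.dist y x = G.dist x y := dist_comm
    set e := G.dist z₀ y
    have hfar : ∀ z ∈ (G.neighborFinset x).erase z₀, G.dist z y = e + 2 := by
      intro z hz
      obtain ⟨hzz₀, hxz⟩ := mem_erase.mp hz
      have := hG.dist_eq_add_one_of_adj_of_ne hxz₀ hz₀ ((mem_neighborFinset ..).mp hxz) hzz₀
      rw [dist_comm] at this
      omega
    have hrest : ∑ z ∈ (G.neighborFinset x).erase z₀, p x z = 1 - p x z₀ := by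
      rw [← hp.sum_eq_one x, ← add_sum_erase _ _ hz₀mem]
      ring
    rw [← add_sum_erase _ _ hz₀mem, sum_congr rfl fun z hz => by rw [hfar z hz], ← sum_mul,
      hrest, show G.dist x y = e + 1 by omega]
    have hmono : μ ^ (e + 2) ≤ μ ^ e := pow_le_pow_of_le_one hμ0.le hμ1 (by omega)
    have hpz₀ := hpq x z₀ hxz₀
    calc p x z₀ * μ ^ e + (1 - p x z₀) * μ ^ (e + 2)
        ≤ q * μ ^ e + (1 - q) * μ ^ (e + 2) := by
          nlinarith [mul_nonneg (sub_nonneg.2 hpz₀) (sub_nonneg.2 hmono)]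
      _ = (q / μ + (1 - q) * μ) * μ ^ (e + 1) := by
          field_simp
          ring

lemma pn_le_pow_mul_pow (hp : IsNearestNeighbourWalk G p) (hG : G.IsTree) {q μ : ℝ}
    (hq : 0 ≤ q) (hpq : ∀ x y, G.Adj x y → p x y ≤ q) (hμ0 : 0 < μ) (hμ1 : μ ≤ 1)
    (n : ℕ) (x y : S) :
    pn p n x y ≤ (q / μ + (1 - q) * μ) ^ n * μ ^ G.dist x y := by
  set r := q / μ + (1 - q) * μ
  have hr : 0 ≤ r := hμ0.le.trans (self_le_div_add_one_sub_mul hq hμ0 hμ1)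
  induction n generalizing x with
  | zero =>
    by_cases hxy : x = y
    · subst hxy
      simp [pn]
    · simp only [pn, if_neg hxy, pow_zero, one_mul]
      positivity
  | succ n ih =>
    rw [hp.pn_succ, pow_succ, mul_assoc]
    calc ∑ z ∈ G.neighborFinset x, p x z * pn p n z y
        ≤ ∑ z ∈ G.neighborFinset x, p x z * (r ^ n * μ ^ G.dist z y) :=
          sum_le_sum fun z _ => mul_le_mul_of_nonneg_left (ih z) (hp.nonneg x z)
      _ = r ^ n * ∑ z ∈ G.neighborFinset x, p x z * μ ^ G.dist z y := by
          rw [mul_sum]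
          exact sum_congr rfl fun z _ => by ring
      _ ≤ r ^ n * (r * μ ^ G.dist x y) :=
          mul_le_mul_of_nonneg_left (hp.sum_mul_pow_dist_le hG hq hpq hμ0 hμ1 x y)
            (pow_nonneg hr n)

lemma exists_pn_le_geometric (hp : IsNearestNeighbourWalk G p) (hG : G.IsTree) {q : ℝ}
    (hq0 : 0 ≤ q) (hq : q < 1 / 2) (hpq : ∀ x y, G.Adj x y → p x y ≤ q) :
    ∃ r, 0 ≤ r ∧ r < 1 ∧ ∀ n x y, pn p n x y ≤ r ^ n := by
  -- `μ` is the midpoint of the interval `(q / (1 - q), 1)` on which `q / μ + (1 - q) μ < 1`.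
  set μ := 1 / (2 * (1 - q))
  have hμ0 : 0 < μ := by
    have : 0 < 1 - q := by linarith
    positivity
  have hμ1 : μ ≤ 1 := by
    rw [div_le_one (by linarith)]
    linarith
  refine ⟨q / μ + (1 - q) * μ, hμ0.le.trans (self_le_div_add_one_sub_mul hq0 hμ0 hμ1), ?_,
    fun n x y => ?_⟩
  · have hr : q / μ + (1 - q) * μ = 1 / 2 + 2 * q * (1 - q) := by
      have : 1 - q ≠ 0 := by linarith
      simp only [μ]
      field_simp
      ring
    rw [hr]
    nlinarith [mul_pos (by linarith : (0 : ℝ) < 1 - 2 * q) (by linarith : (0 : ℝ) < 1 - 2 * q)]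
  · exact (hp.pn_le_pow_mul_pow hG hq0 hpq hμ0 hμ1 n x y).trans
      (mul_le_of_le_one_right (pow_nonneg (hμ0.le.trans
        (self_le_div_add_one_sub_mul hq0 hμ0 hμ1)) n) (pow_le_one₀ hμ0.le hμ1))

lemma summable_pn_and_exists_green_le (hp : IsNearestNeighbourWalk G p) (hG : G.IsTree)
    {q : ℝ} (hq0 : 0 ≤ q) (hq : q < 1 / 2) (hpq : ∀ x y, G.Adj x y → p x y ≤ q) :
    (∀ x y, Summable fun n => pn p n x y) ∧ ∃ M, ∀ x y, green p x y ≤ M := by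
  obtain ⟨r, hr0, hr1, hpn⟩ := hp.exists_pn_le_geometric hG hq0 hq hpq
  have hgeom := summable_geometric_of_lt_one hr0 hr1
  have hsum : ∀ x y, Summable fun n => pn p n x y := fun x y =>
    Summable.of_nonneg_of_le (fun n => hp.pn_nonneg n x y) (fun n => hpn n x y) hgeom
  refine ⟨hsum, (1 - r)⁻¹, fun x y => ?_⟩
  rw [← tsum_geometric_of_lt_one hr0 hr1]
  exact (hsum x y).tsum_le_tsum (fun n => hpn n x y) hgeom

lemma pow_dist_le_pn (hp : IsNearestNeighbourWalk G p) (hG : G.Connected) {ε : ℝ} (hε : 0 ≤ ε)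
    (hεp : ∀ x y, G.Adj x y → ε ≤ p x y) (x y : S) :
    ε ^ G.dist x y ≤ pn p (G.dist x y) x y := by
  induction hd : G.dist x y generalizing x with
  | zero =>
    rw [hG.dist_eq_zero_iff.mp hd]
    simp [pn]
  | succ d ih =>
    have hxy : x ≠ y := by
      rintro rfl
      simp at hd
    obtain ⟨z, hxz, hz⟩ := hG.exists_adj_dist_add_one hxy
    have hzy : G.dist z y = d := by
      rw [dist_comm, dist_comm (u := y)] at *
      omega
    rw [hp.pn_succ, pow_succ']
    calc ε * ε ^ d ≤ p x z * pn p d z y :=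
          mul_le_mul (hεp x z hxz) (ih z hzy) (pow_nonneg hε d) (hp.nonneg x z)
      _ ≤ ∑ z ∈ G.neighborFinset x, p x z * pn p d z y :=
          single_le_sum (f := fun z => p x z * pn p d z y)
            (fun z _ => mul_nonneg (hp.nonneg x z) (hp.pn_nonneg d z y))
            ((mem_neighborFinset ..).mpr hxz)

lemma pow_dist_le_green (hp : IsNearestNeighbourWalk G p) (hG : G.Connected)
    (hsum : ∀ x y, Summable fun n => pn p n x y) {ε : ℝ} (hε : 0 ≤ ε)
    (hεp : ∀ x y, G.Adj x y → ε ≤ p x y) (x y : S) : ε ^ G.dist x y ≤ green p x y :=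
  (hp.pow_dist_le_pn hG hε hεp x y).trans
    ((hsum x y).le_tsum _ fun n _ => hp.pn_nonneg n x y)

end IsNearestNeighbourWalk

end RandomWalk

namespace SimpleGraph

variable {V : Type*}

structure IsGreenKernel (G : SimpleGraph V) (g : V → V → ℝ) (ε M : ℝ) : Prop where
  pos : 0 < ε
  le_bound : ∀ x y, g x y ≤ M
  pow_dist_le : ∀ x y, ε ^ G.dist x y ≤ g x y
  mul_eq_mul : ∀ x w y, G.dist x w + G.dist w y = G.dist x y → g x y * g w w = g x w * g w y

namespace IsGreenKernel

variable {G : SimpleGraph V} {g : V → V → ℝ} {ε M : ℝ}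

lemma apply_pos (hg : G.IsGreenKernel g ε M) (x y : V) : 0 < g x y :=
  (pow_pos hg.pos _).trans_le (hg.pow_dist_le x y)

lemma one_le_apply_self (hg : G.IsGreenKernel g ε M) (x : V) : 1 ≤ g x x := by
  simpa using hg.pow_dist_le x x

lemma le_mul_of_dist_add_dist_eq (hg : G.IsGreenKernel g ε M) {x w y : V}
    (hw : G.dist x w + G.dist w y = G.dist x y) : g x y ≤ g x w * g w y := by
  rw [← hg.mul_eq_mul x w y hw]
  exact le_mul_of_one_le_right (hg.apply_pos x y).le (hg.one_le_apply_self w)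

lemma mul_le_of_dist_add_dist_eq (hg : G.IsGreenKernel g ε M) {x w y : V}
    (hw : G.dist x w + G.dist w y = G.dist x y) : g x w * g w y ≤ M * g x y := by
  rw [← hg.mul_eq_mul x w y hw, mul_comm]
  exact mul_le_mul_of_nonneg_right (hg.le_bound w w) (hg.apply_pos x y).le

lemma apply_le_bound_mul (hg : G.IsGreenKernel g ε M) {x w y : V}
    (hw : G.dist x w + G.dist w y = G.dist x y) : g x y ≤ M * g x w :=
  calc g x y ≤ g x w * g w y := hg.le_mul_of_dist_add_dist_eq hw
    _ ≤ g x w * M := mul_le_mul_of_nonneg_left (hg.le_bound w y) (hg.apply_pos x w).le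
    _ = M * g x w := mul_comm _ _

lemma mul_le_mul_of_adj (hg : G.IsGreenKernel g ε M) (hG : G.IsTree) (hε : ε ≤ 1) (z : V)
    {y y' : V} (hyy' : G.Adj y y') : ε * g z y ≤ M * g z y' := by
  rcases hG.dist_eq_dist_add_one_of_adj z hyy' with h | h
  · have hy' : G.dist z y' + G.dist y' y = G.dist z y := by
      rw [dist_eq_one_iff_adj.mpr hyy'.symm]
      omega
    exact (mul_le_of_le_one_left (hg.apply_pos z y).le hε).trans (hg.apply_le_bound_mul hy')
  · have hy : G.dist z y + G.dist y y' = G.dist z y' := by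
      rw [dist_eq_one_iff_adj.mpr hyy']
      omega
    have hε' : ε ≤ g y y' := by
      simpa [dist_eq_one_iff_adj.mpr hyy'] using hg.pow_dist_le y y'
    calc ε * g z y ≤ g y y' * g z y := mul_le_mul_of_nonneg_right hε' (hg.apply_pos z y).le
      _ = g z y * g y y' := mul_comm _ _
      _ ≤ M * g z y' := hg.mul_le_of_dist_add_dist_eq hy

lemma pow_mul_le_pow_mul (hg : G.IsGreenKernel g ε M) (hG : G.IsTree) (hε : ε ≤ 1)
    (z w : V) : ∀ y, ε ^ G.dist y w * g z y ≤ M ^ G.dist y w * g z w := by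
  intro y
  induction hd : G.dist y w generalizing y with
  | zero =>
    rw [hG.connected.dist_eq_zero_iff.mp hd]
    simp
  | succ d ih =>
    have hyw : y ≠ w := by
      rintro rfl
      simp at hd
    obtain ⟨y', hyy', hy'⟩ := hG.connected.exists_adj_dist_add_one hyw
    have hy'w : G.dist y' w = d := by
      rw [dist_comm, dist_comm (u := w)] at *
      omega
    have hM : 0 ≤ M := (hg.apply_pos z w).le.trans (hg.le_bound z w)
    calc ε ^ (d + 1) * g z y = ε ^ d * (ε * g z y) := by ring
      _ ≤ ε ^ d * (M * g z y') :=
          mul_le_mul_of_nonneg_left (hg.mul_le_mul_of_adj hG hε z hyy') (pow_nonneg hg.pos.le d)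
      _ = M * (ε ^ d * g z y') := by ring
      _ ≤ M * (M ^ d * g z w) := mul_le_mul_of_nonneg_left (ih y' hy'w) hM
      _ = M ^ (d + 1) * g z w := by ring

lemma apply_ray_mul_le (hg : G.IsGreenKernel g ε M) (hG : G.IsTree) {γ : ℕ → V}
    (hγ : G.IsGeodesicRay γ) {z : V} {j : ℕ} (hj : ∀ n, G.dist z (γ j) ≤ G.dist z (γ n))
    (i : ℕ) : g z (γ i) * g (γ 0) (γ j) ≤ M ^ 2 * (g (γ 0) (γ i) * g z (γ j)) := by
  have hzi := hγ.dist_eq_of_forall_le hG hj i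
  have hpos := hg.apply_pos
  have hM : 1 ≤ M := (hg.one_le_apply_self z).trans (hg.le_bound z z)
  rcases le_total i j with hij | hji
  · have hzji : G.dist z (γ j) + G.dist (γ j) (γ i) = G.dist z (γ i) := by
      rw [dist_comm (u := γ j), hγ.dist_of_le hij]
      omega
    have h0ij : G.dist (γ 0) (γ i) + G.dist (γ i) (γ j) = G.dist (γ 0) (γ j) := by
      rw [hγ.dist_of_le hij, hγ.dist_of_le (Nat.zero_le i), hγ.dist_of_le (Nat.zero_le j)]
      omega
    calc g z (γ i) * g (γ 0) (γ j) ≤ (M * g z (γ j)) * (M * g (γ 0) (γ i)) :=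
          mul_le_mul (hg.apply_le_bound_mul hzji) (hg.apply_le_bound_mul h0ij) (hpos _ _).le
            (mul_nonneg (by linarith) (hpos _ _).le)
      _ = M ^ 2 * (g (γ 0) (γ i) * g z (γ j)) := by ring
  · have hzji : G.dist z (γ j) + G.dist (γ j) (γ i) = G.dist z (γ i) := by
      rw [hγ.dist_of_le hji]
      omega
    have h0ji : G.dist (γ 0) (γ j) + G.dist (γ j) (γ i) = G.dist (γ 0) (γ i) := by
      rw [hγ.dist_of_le hji, hγ.dist_of_le (Nat.zero_le i), hγ.dist_of_le (Nat.zero_le j)]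
      omega
    calc g z (γ i) * g (γ 0) (γ j)
        ≤ g z (γ j) * (g (γ 0) (γ j) * g (γ j) (γ i)) := by
          rw [mul_comm (g (γ 0) (γ j)), ← mul_assoc]
          exact mul_le_mul_of_nonneg_right (hg.le_mul_of_dist_add_dist_eq hzji) (hpos _ _).le
      _ ≤ g z (γ j) * (M * g (γ 0) (γ i)) :=
          mul_le_mul_of_nonneg_left (hg.mul_le_of_dist_add_dist_eq h0ji) (hpos _ _).le
      _ = M * (g (γ 0) (γ i) * g z (γ j)) := by ring
      _ ≤ M ^ 2 * (g (γ 0) (γ i) * g z (γ j)) := by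
          rw [sq, mul_assoc]
          exact le_mul_of_one_le_left
            (mul_nonneg (by linarith) (mul_nonneg (hpos _ _).le (hpos _ _).le)) hM

lemma pow_dist_mul_le_of_dist_add_dist_eq (hg : G.IsGreenKernel g ε M) {x w y : V}
    (hw : G.dist x w + G.dist w y = G.dist x y) : ε ^ G.dist w y * g x w ≤ M * g x y :=
  calc ε ^ G.dist w y * g x w ≤ g w y * g x w :=
        mul_le_mul_of_nonneg_right (hg.pow_dist_le w y) (hg.apply_pos x w).le
    _ = g x w * g w y := mul_comm _ _
    _ ≤ M * g x y := hg.mul_le_of_dist_add_dist_eq hw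

lemma pow_mul_mul_le (hg : G.IsGreenKernel g ε M) (hG : G.IsTree) (hε : ε ≤ 1) {γ : ℕ → V}
    (hγ : G.IsGeodesicRay γ) {z y : V} {i j c : ℕ} (hj : ∀ n, G.dist z (γ j) ≤ G.dist z (γ n))
    (hi : ∀ n, G.dist y (γ i) ≤ G.dist y (γ n)) (hy : G.dist y (γ i) ≤ c) :
    ε ^ (2 * c) * (g z y * g (γ 0) (γ j)) ≤ M ^ (c + 3) * (g (γ 0) y * g z (γ j)) := by
  set d := G.dist y (γ i)
  have hpos := hg.apply_pos
  have hM : 1 ≤ M := (hg.one_le_apply_self z).trans (hg.le_bound z z)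
  have hεd : 0 ≤ ε ^ d := pow_nonneg hg.pos.le d
  have hMd : 0 ≤ M ^ d := pow_nonneg (by linarith) d
  have harnack : ε ^ d * g z y ≤ M ^ d * g z (γ i) := hg.pow_mul_le_pow_mul hG hε z (γ i) y
  have hproj : ε ^ d * g (γ 0) (γ i) ≤ M * g (γ 0) y := by
    rw [show d = G.dist (γ i) y from dist_comm]
    refine hg.pow_dist_mul_le_of_dist_add_dist_eq ?_
    have := hγ.dist_eq_of_forall_le hG hi 0
    rw [hγ.dist_of_le (Nat.zero_le i), dist_comm (u := γ i), dist_comm (u := γ 0)]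
    omega
  calc ε ^ (2 * c) * (g z y * g (γ 0) (γ j))
      ≤ (ε ^ d * ε ^ d) * (g z y * g (γ 0) (γ j)) := by
        rw [← pow_add]
        exact mul_le_mul_of_nonneg_right (pow_le_pow_of_le_one hg.pos.le hε (by omega))
          (mul_nonneg (hpos _ _).le (hpos _ _).le)
    _ = ε ^ d * ((ε ^ d * g z y) * g (γ 0) (γ j)) := by ring
    _ ≤ ε ^ d * ((M ^ d * g z (γ i)) * g (γ 0) (γ j)) :=
        mul_le_mul_of_nonneg_left (mul_le_mul_of_nonneg_right harnack (hpos _ _).le) hεd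
    _ = ε ^ d * M ^ d * (g z (γ i) * g (γ 0) (γ j)) := by ring
    _ ≤ ε ^ d * M ^ d * (M ^ 2 * (g (γ 0) (γ i) * g z (γ j))) :=
        mul_le_mul_of_nonneg_left (hg.apply_ray_mul_le hG hγ hj i) (mul_nonneg hεd hMd)
    _ = M ^ d * M ^ 2 * g z (γ j) * (ε ^ d * g (γ 0) (γ i)) := by ring
    _ ≤ M ^ d * M ^ 2 * g z (γ j) * (M * g (γ 0) y) :=
        mul_le_mul_of_nonneg_left hproj (mul_nonneg (mul_nonneg hMd (by positivity)) (hpos _ _).le)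
    _ = M ^ (d + 3) * (g (γ 0) y * g z (γ j)) := by ring
    _ ≤ M ^ (c + 3) * (g (γ 0) y * g z (γ j)) :=
        mul_le_mul_of_nonneg_right (pow_le_pow_right₀ hM (by omega))
          (mul_nonneg (hpos _ _).le (hpos _ _).le)

lemma le_mul_kernel (hg : G.IsGreenKernel g ε M) (hG : G.IsTree) (hε : ε ≤ 1) {γ : ℕ → V}
    (hγ : G.IsGeodesicRay γ) {z y : V} {i j c : ℕ} (hj : ∀ n, G.dist z (γ j) ≤ G.dist z (γ n))
    (hi : ∀ n, G.dist y (γ i) ≤ G.dist y (γ n)) (hy : G.dist y (γ i) ≤ c) :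
    g z y ≤ M ^ (c + 3) / ε ^ (2 * c) * g (γ 0) y * (g z (γ j) / g (γ 0) (γ j)) := by
  have hden : 0 < ε ^ (2 * c) * g (γ 0) (γ j) := mul_pos (pow_pos hg.pos _) (hg.apply_pos _ _)
  calc g z y = ε ^ (2 * c) * (g z y * g (γ 0) (γ j)) / (ε ^ (2 * c) * g (γ 0) (γ j)) := by
        rw [eq_div_iff hden.ne']
        ring
    _ ≤ M ^ (c + 3) * (g (γ 0) y * g z (γ j)) / (ε ^ (2 * c) * g (γ 0) (γ j)) :=
        div_le_div_of_nonneg_right (hg.pow_mul_mul_le hG hε hγ hj hi hy) hden.le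
    _ = M ^ (c + 3) / ε ^ (2 * c) * g (γ 0) y * (g z (γ j) / g (γ 0) (γ j)) := by
        field_simp

end IsGreenKernel

end SimpleGraph

/-- Under hypothesis (H), given a geodesic ray `γ` from `o`
(with projection `π(x) = γ (k x)`) and `c ∈ ℕ`, there is a constant `β` such
that for all `z` and all `y` with `d(y,π(y)) ≤ c`,
`G(z,y) ≤ β ⬝ G(o,y) ⬝ K(z)`, where `K(z) = G(z,π(z))/G(o,π(z))`. -/
theorem green_le_const_mul_kernel
    {S : Type*} [Countable S] (G : SimpleGraph S)
    [∀ x : S, Fintype (G.neighborSet x)]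
    (hconn : G.Connected) (hacyc : G.IsAcyclic)
    (p : S → S → ℝ)
    (hp_pos : ∀ x y, 0 < p x y ↔ G.Adj x y)
    (hp_zero : ∀ x y, ¬ G.Adj x y → p x y = 0)
    (hp_sum : ∀ x, ∑ y ∈ G.neighborFinset x, p x y = 1)
    (ε η : ℝ) (hε : 0 < ε) (hη : 0 < η)
    (hH : ∀ x y, G.Adj x y → ε ≤ p x y ∧ p x y ≤ 1 / 2 - η)
    (o : S) (γ : ℕ → S) (hγ0 : γ 0 = o)
    (hγ : ∀ m n : ℕ, (G.dist (γ m) (γ n) : ℤ) = |(m : ℤ) - (n : ℤ)|)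
    (k : S → ℕ)
    (hk_min : ∀ (x : S) (n : ℕ), G.dist x (γ (k x)) ≤ G.dist x (γ n))
    (hk_uniq : ∀ (x : S) (n : ℕ), G.dist x (γ n) ≤ G.dist x (γ (k x)) → n = k x)
    (K : S → ℝ) (hK : ∀ x, K x = green p x (γ (k x)) / green p o (γ (k x)))
    (c : ℕ) :
    ∃ β : ℝ, ∀ z y : S, G.dist y (γ (k y)) ≤ c →
      green p z y ≤ β * green p o y * K z := by
  have hT : G.IsTree := ⟨hconn, hacyc⟩
  have hp : IsNearestNeighbourWalk G p := by
    refine ⟨fun x y => ?_, hp_zero, hp_sum⟩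
    by_cases h : G.Adj x y
    · exact ((hp_pos x y).2 h).le
    · exact (hp_zero x y h).ge
  obtain ⟨hεp, hpη⟩ := hH _ _ (SimpleGraph.IsGeodesicRay.adj_succ hγ 0)
  obtain ⟨hsum, M, hM⟩ := hp.summable_pn_and_exists_green_le hT (q := 1 / 2 - η)
    (by linarith) (by linarith) fun x y h => (hH x y h).2
  have hg : G.IsGreenKernel (green p) ε M :=
    ⟨hε, hM, hp.pow_dist_le_green hconn hsum hε.le fun x y h => (hH x y h).1,
      fun x w y hw => hp.green_mul_green_eq hT hsum hw⟩
  refine ⟨M ^ (c + 3) / ε ^ (2 * c), fun z y hy => ?_⟩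
  rw [hK, ← hγ0]
  exact hg.le_mul_kernel hT (by linarith) hγ (hk_min z) (hk_min y) hy
end
end
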